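/- Let μ : t0 → t1 be a rewrite step via a non-collapsing, left-linear rule r : λ → ρ with t0 = C[λσ] and t1 = C[ρσ], let L be a labeling of μ, and let P1 ⊆ Pos(t1) with P0 = ⋃_{w∈P1} ◁_μ^L w. If P1 ⊆ Pos(C) (all relevant positions lie in the context), then slice(t0,P0) = slice(t1,P1). -/
import Mathlib


open scoped Classical

abbrev Pos := List ℕ

/-- Ground terms over a signature `F` (variadic). -/
inductive GTerm (F : Type) : Type
  | fn : F → List (GTerm F) → GTerm F

/-- Term slices: terms over `F ∪ {•}`. -/
inductive STerm (F : Type) : Type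
  | bullet : STerm F
  | fn : F → List (STerm F) → STerm F

/-- Terms with variables over `F`. -/
inductive VTerm (F : Type) : Type
  | var : ℕ → VTerm F
  | fn : F → List (VTerm F) → VTerm F

variable {F : Type}

def GTerm.subtermAt : Pos → GTerm F → Option (GTerm F)
  | [], t => some t
  | i :: p, .fn _ args => (args[i]?).bind (GTerm.subtermAt p)

def GTerm.isPos (p : Pos) (t : GTerm F) : Prop := (GTerm.subtermAt p t).isSome

def GTerm.rootSym : GTerm F → F
  | .fn f _ => f

def GTerm.rootSymAt (p : Pos) (t : GTerm F) : Option F :=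
  (GTerm.subtermAt p t).map GTerm.rootSym

def STerm.subtermAt : Pos → STerm F → Option (STerm F)
  | [], t => some t
  | _ :: _, .bullet => none
  | i :: p, .fn _ args => (args[i]?).bind (STerm.subtermAt p)

def STerm.rootSym : STerm F → Option F
  | .bullet => none
  | .fn f _ => some f

def STerm.rootSymAt (p : Pos) (t : STerm F) : Option F :=
  (STerm.subtermAt p t).bind STerm.rootSym

/-- Non-`•` positions of a term slice. -/
def STerm.isPos (p : Pos) (t : STerm F) : Prop :=
  ∃ u, STerm.subtermAt p t = some u ∧ u ≠ .bullet

def VTerm.subtermAt : Pos → VTerm F → Option (VTerm F)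
  | [], t => some t
  | _ :: _, .var _ => none
  | i :: p, .fn _ args => (args[i]?).bind (VTerm.subtermAt p)

def VTerm.rootSym : VTerm F → Option F
  | .var _ => none
  | .fn f _ => some f

def VTerm.rootSymAt (p : Pos) (t : VTerm F) : Option F :=
  (VTerm.subtermAt p t).bind VTerm.rootSym

/-- Positions of the redex/contractum pattern: non-variable positions. -/
def VTerm.patPos (p : Pos) (t : VTerm F) : Prop :=
  ∃ f args, VTerm.subtermAt p t = some (.fn f args)

mutual
  def VTerm.subst (σ : ℕ → GTerm F) : VTerm F → GTerm F
    | .var n => σ n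
    | .fn f args => .fn f (VTerm.substList σ args)
  def VTerm.substList (σ : ℕ → GTerm F) : List (VTerm F) → List (GTerm F)
    | [] => []
    | a :: as => VTerm.subst σ a :: VTerm.substList σ as
end

mutual
  def GTerm.replaceAt : GTerm F → Pos → GTerm F → GTerm F
    | _, [], r => r
    | .fn f args, i :: p, r => .fn f (GTerm.replaceAtList args i p r)
  def GTerm.replaceAtList : List (GTerm F) → ℕ → Pos → GTerm F → List (GTerm F)
    | [], _, _, _ => []
    | a :: as, 0, p, r => GTerm.replaceAt a p r :: as
    | a :: as, n + 1, p, r => a :: GTerm.replaceAtList as n p r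
end

mutual
  def STerm.replaceAt : STerm F → Pos → STerm F → STerm F
    | _, [], r => r
    | .bullet, _ :: _, _ => .bullet
    | .fn f args, i :: p, r => .fn f (STerm.replaceAtList args i p r)
  def STerm.replaceAtList : List (STerm F) → ℕ → Pos → STerm F → List (STerm F)
    | [], _, _, _ => []
    | a :: as, 0, p, r => STerm.replaceAt a p r :: as
    | a :: as, n + 1, p, r => a :: STerm.replaceAtList as n p r
end

mutual
  noncomputable def GTerm.slRec (P : Set Pos) : GTerm F → Pos → STerm F
    | .fn f args, p =>
        if ∃ w, (p ++ w) ∈ P then .fn f (GTerm.slRecList P args p 0) else .bullet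
  noncomputable def GTerm.slRecList (P : Set Pos) : List (GTerm F) → Pos → ℕ → List (STerm F)
    | [], _, _ => []
    | a :: as, p, i => GTerm.slRec P a (p ++ [i]) :: GTerm.slRecList P as p (i + 1)
end

/-- `slice(t,P)`. -/
noncomputable def GTerm.slice (t : GTerm F) (P : Set Pos) : STerm F := GTerm.slRec P t []

/-- Concretization: `Conc t• t'` iff replacing the `•`s of `t•` by distinct fresh
variables yields a term more general than `t'`. -/
inductive Conc {F : Type} : STerm F → GTerm F → Prop
  | bullet (t : GTerm F) : Conc .bullet t
  | fn (f : F) (as : List (STerm F)) (bs : List (GTerm F))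
      (hlen : as.length = bs.length)
      (h : ∀ (i : ℕ) (a : STerm F) (b : GTerm F),
            as[i]? = some a → bs[i]? = some b → Conc a b) :
      Conc (.fn f as) (.fn f bs)

/-- Origin positions `◁_μ^L w` of a labeled rewrite step `t0 → t1`. -/
def originSet {α : Type} (t0 t1 : GTerm F) (Ls Lt : Pos → Set α) (w : Pos) : Set Pos :=
  {v | GTerm.isPos v t0 ∧ ∃ p, GTerm.isPos p t1 ∧ p <+: w ∧ Ls v ⊆ Lt p}

/-- A rewrite step with rule `lam → rho` at position `q`. -/
def RewritesAt (lam rho : VTerm F) (q : Pos) (t0 t1 : GTerm F) : Prop :=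
  ∃ σ : ℕ → GTerm F, GTerm.subtermAt q t0 = some (VTerm.subst σ lam) ∧
    t1 = GTerm.replaceAt t0 q (VTerm.subst σ rho)

def leftLinear (lam : VTerm F) : Prop :=
  ∀ n p p', VTerm.subtermAt p lam = some (.var n) →
    VTerm.subtermAt p' lam = some (.var n) → p = p'

def nonCollapsing (rho : VTerm F) : Prop := ∀ n, rho ≠ .var n
/-- The labeling of an (elementary) rewrite step `t0 = C[λσ] → C[ρσ] = t1` at hole
position `q`: every position of `t0` (context, redex pattern, substitution part) carries
a distinct fresh atomic label; context and substitution positions of `t1` carry the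
same labels as the corresponding positions of `t0`; every contractum-pattern symbol of
`t1` carries the union of all the redex-pattern labels. -/
structure ElemStepLabeling (F α : Type) (lam rho : VTerm F) (q : Pos) (σ : ℕ → GTerm F)
    (t0 t1 : GTerm F) (Ls Lt : Pos → Set α) : Prop where
  hsub : GTerm.subtermAt q t0 = some (VTerm.subst σ lam)
  hrepl : t1 = GTerm.replaceAt t0 q (VTerm.subst σ rho)
  atoms : ∀ v, GTerm.isPos v t0 → ∃ a, Ls v = {a}
  inj : ∀ v w, GTerm.isPos v t0 → GTerm.isPos w t0 → Ls v = Ls w → v = w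
  ctx_eq : ∀ v, ¬ q <+: v → Lt v = Ls v
  contr : ∀ u', VTerm.patPos u' rho →
      Lt (q ++ u') = ⋃ v' ∈ {p : Pos | VTerm.patPos p lam}, Ls (q ++ v')
  subst_eq : ∀ (u' : Pos) (n : ℕ) (v'' : Pos), VTerm.subtermAt u' rho = some (.var n) →
      ∀ v', VTerm.subtermAt v' lam = some (.var n) →
        Lt (q ++ u' ++ v'') = Ls (q ++ v' ++ v'')
/-- Shape of a ground term: root symbol and number of arguments. -/
def gshape : GTerm F → F × ℕ
  | .fn f as => (f, as.length)

theorem replaceAtList_length (as : List (GTerm F)) (n : ℕ) (p : Pos) (r : GTerm F) :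
    (GTerm.replaceAtList as n p r).length = as.length := by
  induction as generalizing n with
  | nil => simp [GTerm.replaceAtList]
  | cons a as ih =>
    cases n with
    | zero => simp [GTerm.replaceAtList]
    | succ n => simp [GTerm.replaceAtList, ih]

theorem replaceAtList_get (as : List (GTerm F)) (n : ℕ) (p : Pos) (r : GTerm F) (j : ℕ) :
    (GTerm.replaceAtList as n p r)[j]? =
      if j = n then (as[n]?).map (fun a => a.replaceAt p r) else as[j]? := by
  induction as generalizing n j with
  | nil => simp [GTerm.replaceAtList]
  | cons a as ih =>
    cases n with
    | zero =>
      cases j with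
      | zero => simp [GTerm.replaceAtList]
      | succ j => simp [GTerm.replaceAtList]
    | succ n =>
      cases j with
      | zero => simp [GTerm.replaceAtList]
      | succ j => simpa [GTerm.replaceAtList] using ih n j

theorem shape_replaceAt (v : Pos) (t r : GTerm F) (p : Pos) (hp : ¬ p <+: v) :
    (GTerm.subtermAt v (t.replaceAt p r)).map gshape
      = (GTerm.subtermAt v t).map gshape := by
  induction v generalizing t p with
  | nil =>
    cases t with
    | fn f as =>
      cases p with
      | nil => exact absurd List.prefix_rfl hp
      | cons i p' =>
        simp [GTerm.replaceAt, GTerm.subtermAt, gshape, replaceAtList_length]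
  | cons j v ih =>
    cases t with
    | fn f as =>
      cases p with
      | nil => exact absurd List.nil_prefix hp
      | cons i p' =>
        simp only [GTerm.replaceAt, GTerm.subtermAt, replaceAtList_get]
        by_cases hji : j = i
        · subst hji
          have hp' : ¬ p' <+: v := by
            intro h
            exact hp (List.cons_prefix_cons.mpr ⟨rfl, h⟩)
          cases has : as[j]? with
          | none => simp
          | some a => simpa using ih a p' hp'
        · simp [hji]

theorem subtermAt_append (u v : Pos) (t : GTerm F) :
    GTerm.subtermAt (u ++ v) t = (GTerm.subtermAt u t).bind (GTerm.subtermAt v) := by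
  induction u generalizing t with
  | nil => simp [GTerm.subtermAt]
  | cons i u ih =>
    cases t with
    | fn f as =>
      simp only [List.cons_append, GTerm.subtermAt]
      cases as[i]? with
      | none => simp
      | some a => simpa using ih a

theorem isPos_of_prefix {v w : Pos} {t : GTerm F} (hvw : v <+: w) (hw : GTerm.isPos w t) :
    GTerm.isPos v t := by
  obtain ⟨u, rfl⟩ := hvw
  rw [GTerm.isPos, subtermAt_append] at hw
  cases h : GTerm.subtermAt v t with
  | none => rw [h] at hw; simp [Option.isSome] at hw
  | some s => simp [GTerm.isPos, h]

mutual
theorem slice_mainT (P0 P1 : Set Pos) (Q : Pos → Prop)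
    (hQ0 : ∀ p : Pos, (∃ w, p ++ w ∈ P0) ↔ Q p)
    (hQ1 : ∀ p : Pos, (∃ w, p ++ w ∈ P1) ↔ Q p) :
    ∀ (s0 s1 : GTerm F) (p : Pos),
      (∀ v, Q (p ++ v) →
        (GTerm.subtermAt v s0).map gshape = (GTerm.subtermAt v s1).map gshape) →
      GTerm.slRec P0 s0 p = GTerm.slRec P1 s1 p
  | .fn f as0, .fn g as1, p, hsh => by
    rw [GTerm.slRec, GTerm.slRec]
    by_cases hq : Q p
    · have h0 := hsh [] (by simpa using hq)
      simp only [GTerm.subtermAt, Option.map_some, gshape] at h0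
      have hf : f = g := (Prod.mk.injEq _ _ _ _ ▸ (Option.some.injEq _ _ ▸ h0)).1
      have hlen : as0.length = as1.length :=
        (Prod.mk.injEq _ _ _ _ ▸ (Option.some.injEq _ _ ▸ h0)).2
      rw [if_pos ((hQ0 p).mpr hq), if_pos ((hQ1 p).mpr hq), hf]
      have htail : GTerm.slRecList P0 as0 p 0 = GTerm.slRecList P1 as1 p 0 := by
        apply slice_mainL P0 P1 Q hQ0 hQ1 as0 as1 p 0 hlen
        intro j v hqv
        have := hsh (j :: v) (by simpa using hqv)
        simpa [GTerm.subtermAt] using this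
      rw [htail]
    · rw [if_neg (fun h => hq ((hQ0 p).mp h)), if_neg (fun h => hq ((hQ1 p).mp h))]

theorem slice_mainL (P0 P1 : Set Pos) (Q : Pos → Prop)
    (hQ0 : ∀ p : Pos, (∃ w, p ++ w ∈ P0) ↔ Q p)
    (hQ1 : ∀ p : Pos, (∃ w, p ++ w ∈ P1) ↔ Q p) :
    ∀ (as0 as1 : List (GTerm F)) (p : Pos) (i : ℕ),
      as0.length = as1.length →
      (∀ (j : ℕ) (v : Pos), Q (p ++ (i + j) :: v) →
        ((as0[j]?).bind (GTerm.subtermAt v)).map gshape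
          = ((as1[j]?).bind (GTerm.subtermAt v)).map gshape) →
      GTerm.slRecList P0 as0 p i = GTerm.slRecList P1 as1 p i
  | [], [], p, i, _, _ => rfl
  | [], b :: bs, p, i, hlen, _ => by simp at hlen
  | a :: as, [], p, i, hlen, _ => by simp at hlen
  | a :: as, b :: bs, p, i, hlen, hsh => by
    rw [GTerm.slRecList, GTerm.slRecList]
    have hhead : GTerm.slRec P0 a (p ++ [i]) = GTerm.slRec P1 b (p ++ [i]) := by
      apply slice_mainT P0 P1 Q hQ0 hQ1 a b (p ++ [i])
      intro v hqv
      have := hsh 0 v (by simpa using hqv)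
      simpa using this
    have htail : GTerm.slRecList P0 as p (i + 1) = GTerm.slRecList P1 bs p (i + 1) := by
      apply slice_mainL P0 P1 Q hQ0 hQ1 as bs p (i + 1) (by simpa using hlen)
      intro j v hqv
      have := hsh (j + 1) v (by rw [show i + (j + 1) = i + 1 + j by omega]; exact hqv)
      simpa using this
    rw [hhead, htail]
end

theorem slice_eq_when_relevant_in_context {F α : Type} (lam rho : VTerm F) (q : Pos)
    (σ : ℕ → GTerm F) (t0 t1 : GTerm F) (Ls Lt : Pos → Set α)
    (hL : ElemStepLabeling F α lam rho q σ t0 t1 Ls Lt)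
    (hll : leftLinear lam) (hnc : nonCollapsing rho)
    (P1 : Set Pos) (hP1 : ∀ w ∈ P1, GTerm.isPos w t1 ∧ ¬ q <+: w)
    (P0 : Set Pos) (hP0 : P0 = ⋃ w ∈ P1, originSet t0 t1 Ls Lt w) :
    GTerm.slice t0 P0 = GTerm.slice t1 P1 := by
  classical
  set Q : Pos → Prop := fun v => ∃ w ∈ P1, v <+: w with hQdef
  -- shape agreement between t0 and t1 off q
  have hshape : ∀ v : Pos, ¬ q <+: v →
      (GTerm.subtermAt v t1).map gshape = (GTerm.subtermAt v t0).map gshape := by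
    intro v hv
    rw [hL.hrepl]
    exact shape_replaceAt v t0 (VTerm.subst σ rho) q hv
  have hQnotq : ∀ v : Pos, Q v → ¬ q <+: v := by
    rintro v ⟨w, hw, hvw⟩ hqv
    exact (hP1 w hw).2 (hqv.trans hvw)
  have hQpos1 : ∀ v : Pos, Q v → GTerm.isPos v t1 := by
    rintro v ⟨w, hw, hvw⟩
    exact isPos_of_prefix hvw (hP1 w hw).1
  have hQpos0 : ∀ v : Pos, Q v → GTerm.isPos v t0 := by
    intro v hv
    have h := hshape v (hQnotq v hv)
    have h1 := hQpos1 v hv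
    rw [GTerm.isPos] at h1 ⊢
    cases h0 : GTerm.subtermAt v t0 with
    | some s => simp
    | none =>
      rw [h0] at h
      cases ht1 : GTerm.subtermAt v t1 with
      | none => rw [ht1] at h1; simp [Option.isSome] at h1
      | some s => rw [ht1] at h; simp at h
  -- characterization of P0
  have hchar : ∀ v : Pos, v ∈ P0 ↔ Q v := by
    intro v
    rw [hP0]
    simp only [Set.mem_iUnion, originSet, Set.mem_setOf_eq]
    constructor
    · rintro ⟨w, hw, hv0, p, hp1, hpw, hsubL⟩
      have hnqw : ¬ q <+: w := (hP1 w hw).2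
      have hnqp : ¬ q <+: p := fun h => hnqw (h.trans hpw)
      have hp0 : GTerm.isPos p t0 := by
        have h := hshape p hnqp
        rw [GTerm.isPos] at hp1 ⊢
        cases h0 : GTerm.subtermAt p t0 with
        | some s => simp
        | none =>
          rw [h0] at h
          cases ht1 : GTerm.subtermAt p t1 with
          | none => rw [ht1] at hp1; simp [Option.isSome] at hp1
          | some s => rw [ht1] at h; simp at h
      obtain ⟨a, ha⟩ := hL.atoms v hv0
      obtain ⟨b, hb⟩ := hL.atoms p hp0
      rw [hL.ctx_eq p hnqp] at hsubL
      have hab : a = b := by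
        have := hsubL (by rw [ha]; exact rfl)
        rwa [hb] at this
      have hvp : v = p := hL.inj v p hv0 hp0 (by rw [ha, hb, hab])
      exact ⟨w, hw, hvp ▸ hpw⟩
    · rintro ⟨w, hw, hvw⟩
      have hv1 : GTerm.isPos v t1 := hQpos1 v ⟨w, hw, hvw⟩
      have hnq : ¬ q <+: v := hQnotq v ⟨w, hw, hvw⟩
      have hv0 : GTerm.isPos v t0 := hQpos0 v ⟨w, hw, hvw⟩
      exact ⟨w, hw, hv0, v, hv1, hvw, by rw [hL.ctx_eq v hnq]⟩
  have hQ1 : ∀ p : Pos, (∃ w, p ++ w ∈ P1) ↔ Q p := by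
    intro p
    constructor
    · rintro ⟨w, hw⟩
      exact ⟨p ++ w, hw, List.prefix_append _ _⟩
    · rintro ⟨w, hw, u, rfl⟩
      exact ⟨u, hw⟩
  have hQ0 : ∀ p : Pos, (∃ w, p ++ w ∈ P0) ↔ Q p := by
    intro p
    constructor
    · rintro ⟨w, hw⟩
      obtain ⟨w', hw', hpw⟩ := (hchar _).mp hw
      exact ⟨w', hw', (List.prefix_append _ _).trans hpw⟩
    · intro hq
      exact ⟨[], by simpa using (hchar p).mpr hq⟩
  rw [GTerm.slice, GTerm.slice]
  apply slice_mainT P0 P1 Q hQ0 hQ1 t0 t1 []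
  intro v hqv
  simp only [List.nil_append] at hqv
  exact (hshape v (hQnotq v hqv)).symm
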